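/- For every natural number t ≥ 0, the t-th power of the matrix product T·R⁻¹ satisfies the closed form (T·R⁻¹)^t = I + t·Q + t²·N', where Q = [[-3/2,-1/2,1/2],[-3,1,1],[-3/2,-5/2,1/2]] and N' = [[3/2,-1/2,-1/2],[0,0,0],[9/2,-3/2,-3/2]]. -/

import Mathlib

open Matrix

/-- The matrix `R`. -/
def R : Matrix (Fin 3) (Fin 3) ℝ := !![0,0,-1; 1,0,-1; 0,1,-1]

/-- The matrix `T`. -/
def T : Matrix (Fin 3) (Fin 3) ℝ := !![-1,0,0; 2,1,0; -4,0,1]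

/-- `Q = log(T·R⁻¹)`. -/
noncomputable def Q : Matrix (Fin 3) (Fin 3) ℝ := !![-3/2,-1/2,1/2; -3,1,1; -3/2,-5/2,1/2]

/-- `N' = Q²/2`. -/
noncomputable def N' : Matrix (Fin 3) (Fin 3) ℝ := !![3/2,-1/2,-1/2; 0,0,0; 9/2,-3/2,-3/2]

/-!
`Q` is nilpotent with `Q² = 2N'` and `Q³ = 0`, and `T·R⁻¹ = 1 + Q + N'` is its exponential.
Hence `(T·R⁻¹)^t = exp (t • Q) = 1 + t • Q + t² • N'`. The relations `Q² = 2N'` and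
`QN' = N'Q = N'² = 0` alone already give this by induction on `t`, without any analysis.
-/

theorem one_add_add_pow_of_mul_eq_two_nsmul {A : Type*} [Ring A] {q n : A}
    (hqq : q * q = 2 • n) (hqn : q * n = 0) (hnq : n * q = 0) (hnn : n * n = 0) (t : ℕ) :
    (1 + q + n) ^ t = 1 + t • q + (t ^ 2) • n := by
  induction t with
  | zero => simp
  | succ t ih =>
    rw [pow_succ, ih]
    simp only [mul_add, add_mul, one_mul, mul_one, smul_mul_assoc, hqq, hqn, hnq, hnn,
      smul_zero, add_zero, smul_smul]
    module

theorem inv_R : R⁻¹ = !![-1,1,0; -1,0,1; -1,0,0] := by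
  refine inv_eq_right_inv ?_
  rw [R, mul_fin_three, one_fin_three]
  norm_num

theorem T_mul_inv_R : T * R⁻¹ = 1 + Q + N' := by
  rw [inv_R, T, Q, N', mul_fin_three, one_fin_three]
  ext i j
  fin_cases i <;> fin_cases j <;> norm_num

theorem Q_mul_Q : Q * Q = 2 • N' := by
  rw [Q, N', mul_fin_three]
  ext i j
  fin_cases i <;> fin_cases j <;> norm_num

theorem Q_mul_N' : Q * N' = 0 := by
  rw [Q, N', mul_fin_three]
  ext i j
  fin_cases i <;> fin_cases j <;> norm_num

theorem N'_mul_Q : N' * Q = 0 := by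
  rw [Q, N', mul_fin_three]
  ext i j
  fin_cases i <;> fin_cases j <;> norm_num

theorem N'_mul_N' : N' * N' = 0 := by
  rw [N', mul_fin_three]
  ext i j
  fin_cases i <;> fin_cases j <;> norm_num

/-- Closed form for the powers of `T·R⁻¹`: `(T·R⁻¹)^t = I + t·Q + t²·N'`. -/
theorem TRinv_pow (t : ℕ) :
    (T * R⁻¹) ^ t = 1 + (t : ℝ) • Q + ((t : ℝ) ^ 2) • N' := by
  rw [T_mul_inv_R, one_add_add_pow_of_mul_eq_two_nsmul Q_mul_Q Q_mul_N' N'_mul_Q N'_mul_N' t,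
    ← Nat.cast_pow, Nat.cast_smul_eq_nsmul, Nat.cast_smul_eq_nsmul]
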